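/- Let d_S ≥ 2, let ρ_{SE} be a density matrix on ℂ^{d_S} ⊗ ℂ^{d_E} with reduced state ρ_S = Tr_E ρ_{SE}, and set χ = ‖ρ_S − I_S/d_S‖₁. If χ ≤ 1/d_S, then ρ_S is positive definite and for every Hermitian matrix H on ℂ^{d_S} ⊗ ℂ^{d_E}: |Tr(H·[log₂(ρ_S) ⊗ I_E, ρ_{SE}])| ≤ Δ(H)·d_S·χ, where Δ(H) = 2·min_{λ∈ℝ} ‖H − λ·I‖_∞. (That is, the entropy-rate bound holds with ‖H‖_∞ replaced by Δ(H)/2, since adding a multiple of the identity to H does not change the entropy rate.) -/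

import Mathlib

open scoped Kronecker ComplexOrder
open Matrix MeasureTheory

noncomputable section

/-- The trace norm `‖A‖₁ = Tr √(AᴴA)`. -/
def traceNorm {n : Type*} [Fintype n] [DecidableEq n] (A : Matrix n n ℂ) : ℝ :=
  (((Matrix.posSemidef_conjTranspose_mul_self A).1.eigenvectorUnitary.1 *
      diagonal ((fun r : ℝ => (r : ℂ)) ∘ (√·) ∘ (Matrix.posSemidef_conjTranspose_mul_self A).1.eigenvalues) *
      (star (Matrix.posSemidef_conjTranspose_mul_self A).1.eigenvectorUnitary : Matrix n n ℂ)).trace).re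

/-- The operator (spectral) norm `‖A‖_∞`. -/
def opNorm {n : Type*} [Fintype n] [DecidableEq n] (A : Matrix n n ℂ) : ℝ :=
  ‖Matrix.toEuclideanCLM (𝕜 := ℂ) A‖

/-- The partial trace over the second tensor factor. -/
def ptrace2 {m e : Type*} [Fintype e] (ρ : Matrix (m × e) (m × e) ℂ) : Matrix m m ℂ :=
  Matrix.of fun i j => ∑ k, ρ (i, k) (j, k)

/-- The binary logarithm `log₂` of a Hermitian matrix, via the spectral functional
calculus (junk value `0` on non-Hermitian input). -/
def matLog2 {n : Type*} [Fintype n] [DecidableEq n] (A : Matrix n n ℂ) : Matrix n n ℂ :=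
  if hA : A.IsHermitian then hA.cfc (Real.logb 2) else 0

/-- The commutator `[A, B] = A·B − B·A`. -/
def mcomm {n : Type*} [Fintype n] (A B : Matrix n n ℂ) : Matrix n n ℂ :=
  A * B - B * A

/-!
Diagonalize `ρ_S = U diag(μ) U†`. Then `χ = ∑ |μ_i - 1/d|`, and since the deviations
`μ_i - 1/d` sum to zero, each of them is at most `χ/2 ≤ 1/(2d)` in absolute value. Hence
`ρ_S > 0`, and `log₂ ρ_S + log₂ d = U diag(log₂(d μ_i)) U†` has operator norm at most `dχ`,
because `|log₂ x| ≤ 2|x - 1|` for `x ≥ 1/2` (concavity of `log₂` on `[1/2, 1]`).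
By cyclicity, `Tr(H [X, ρ]) = Tr([H, X] ρ)`, and the commutator does not change when `H` and
`X` are shifted by multiples of the identity. For a density matrix `|Tr(Y ρ)| ≤ ‖Y‖_∞`, so the
rate is at most `‖[H - λ, log₂ ρ_S ⊗ I + log₂ d]‖_∞ ≤ 2 ‖H - λ‖_∞ d χ` for every `λ`.
-/

open scoped Matrix.Norms.L2Operator

lemma Real.abs_logb_two_le {x : ℝ} (hx : 1 / 2 ≤ x) : |Real.logb 2 x| ≤ 2 * |x - 1| := by
  have hlog2 : 1 / 2 < Real.log 2 := lt_trans (by norm_num) Real.log_two_gt_d9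
  rcases le_total 1 x with h1 | h1
  · rw [abs_of_nonneg (Real.logb_nonneg one_lt_two h1), abs_of_nonneg (by linarith), Real.logb,
      div_le_iff₀ (by positivity)]
    nlinarith [Real.log_le_sub_one_of_pos (by linarith : 0 < x)]
  · have hchord := strictConcaveOn_log_Ioi.concaveOn.2 (Set.mem_Ioi.2 (by norm_num : (0:ℝ) < 1 / 2))
      (Set.mem_Ioi.2 one_pos) (by linarith : 0 ≤ 2 - 2 * x) (by linarith : 0 ≤ 2 * x - 1)
      (by ring)
    simp only [smul_eq_mul, Real.log_one, mul_zero, add_zero, mul_one, one_div, Real.log_inv]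
      at hchord
    rw [show (2 - 2 * x) * 2⁻¹ + (2 * x - 1) = x by ring] at hchord
    rw [abs_of_nonpos (Real.logb_nonpos one_lt_two (by linarith) h1), abs_of_nonpos (by linarith),
      Real.logb, neg_le, le_div_iff₀ (by positivity)]
    linarith

lemma Finset.abs_le_half_sum_abs_of_sum_eq_zero {ι : Type*} {s : Finset ι} {δ : ι → ℝ}
    (hδ : ∑ j ∈ s, δ j = 0) {i : ι} (hi : i ∈ s) : |δ i| ≤ (∑ j ∈ s, |δ j|) / 2 := by
  classical
  have hrest : ∑ j ∈ s.erase i, δ j = -δ i := by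
    linarith [add_sum_erase s δ hi]
  have := abs_sum_le_sum_abs δ (s.erase i)
  rw [hrest, abs_neg] at this
  linarith [add_sum_erase s (fun j => |δ j|) hi]

namespace Matrix

section PartialTrace

variable {m e : Type*} [Fintype e]

lemma ptrace2_eq_sum_submatrix (ρ : Matrix (m × e) (m × e) ℂ) :
    ptrace2 ρ = ∑ k, ρ.submatrix (·, k) (·, k) := by
  ext i j
  simp [ptrace2, sum_apply]

lemma trace_ptrace2 [Fintype m] (ρ : Matrix (m × e) (m × e) ℂ) : (ptrace2 ρ).trace = ρ.trace := by
  simp [ptrace2, trace, Fintype.sum_prod_type]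

lemma PosSemidef.ptrace2 {ρ : Matrix (m × e) (m × e) ℂ} (hρ : ρ.PosSemidef) :
    (ptrace2 ρ).PosSemidef := by
  rw [ptrace2_eq_sum_submatrix]
  exact posSemidef_sum _ fun k _ => hρ.submatrix _

end PartialTrace

variable {n : Type*} [Fintype n]

lemma trace_mul_mcomm (H X ρ : Matrix n n ℂ) :
    trace (H * mcomm X ρ) = trace (mcomm H X * ρ) := by
  simp only [mcomm, Matrix.mul_sub, Matrix.sub_mul, trace_sub, ← Matrix.mul_assoc]
  rw [trace_mul_cycle H ρ X]

variable [DecidableEq n]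

lemma mcomm_sub_smul_one (A B : Matrix n n ℂ) (a b : ℂ) :
    mcomm (A - a • 1) (B - b • 1) = mcomm A B := by
  simp only [mcomm, Matrix.sub_mul, Matrix.mul_sub, Matrix.smul_mul, Matrix.mul_smul,
    Matrix.one_mul, Matrix.mul_one]
  module

lemma opNorm_eq_norm (A : Matrix n n ℂ) : opNorm A = ‖A‖ := rfl

lemma norm_apply_le_l2_opNorm (A : Matrix n n ℂ) (i j : n) : ‖A i j‖ ≤ ‖A‖ := by
  have h := A.l2_opNorm_mulVec (EuclideanSpace.single j 1)
  rw [PiLp.norm_single, norm_one, mul_one] at h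
  refine le_trans (le_of_eq ?_) ((PiLp.norm_apply_le _ i).trans h)
  simp [mulVec_single]

lemma norm_mcomm_le (A B : Matrix n n ℂ) : ‖mcomm A B‖ ≤ 2 * ‖A‖ * ‖B‖ := by
  calc ‖mcomm A B‖ ≤ ‖A‖ * ‖B‖ + ‖B‖ * ‖A‖ :=
        (norm_sub_le _ _).trans (add_le_add (norm_mul_le _ _) (norm_mul_le _ _))
    _ = 2 * ‖A‖ * ‖B‖ := by ring

def conjDiagonal (U : unitaryGroup n ℂ) (d : n → ℝ) : Matrix n n ℂ :=
  Unitary.conjStarAlgAut ℂ _ U (diagonal (RCLike.ofReal ∘ d))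

lemma IsHermitian.eq_conjDiagonal {A : Matrix n n ℂ} (hA : A.IsHermitian) :
    A = conjDiagonal hA.eigenvectorUnitary hA.eigenvalues :=
  hA.spectral_theorem

lemma IsHermitian.matLog2_eq_conjDiagonal {A : Matrix n n ℂ} (hA : A.IsHermitian) :
    matLog2 A = conjDiagonal hA.eigenvectorUnitary (Real.logb 2 ∘ hA.eigenvalues) :=
  dif_pos hA

section ConjDiagonal

variable (U : unitaryGroup n ℂ)

lemma conjDiagonal_sub (d d' : n → ℝ) :
    conjDiagonal U d - conjDiagonal U d' = conjDiagonal U (d - d') := by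
  simp only [conjDiagonal, ← map_sub, diagonal_sub]
  congr 3
  ext i
  simp

lemma conjDiagonal_const (c : ℝ) : conjDiagonal U (fun _ => c) = (c : ℂ) • 1 := by
  rw [conjDiagonal, Function.comp_def, ← smul_one_eq_diagonal, map_smul, map_one]
  rfl

lemma conjDiagonal_mul (d d' : n → ℝ) :
    conjDiagonal U d * conjDiagonal U d' = conjDiagonal U (d * d') := by
  simp only [conjDiagonal, ← map_mul, diagonal_mul_diagonal]
  congr 3
  ext i
  simp

lemma conjTranspose_conjDiagonal (d : n → ℝ) : (conjDiagonal U d)ᴴ = conjDiagonal U d := by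
  rw [← star_eq_conjTranspose, conjDiagonal, ← map_star, star_eq_conjTranspose,
    diagonal_conjTranspose]
  congr 3
  ext i
  simp

lemma norm_conjDiagonal_le (d : n → ℝ) {c : ℝ} (hc : 0 ≤ c) (hd : ∀ i, |d i| ≤ c) :
    ‖conjDiagonal U d‖ ≤ c := by
  rw [conjDiagonal, Unitary.conjStarAlgAut_apply, ← Unitary.coe_star,
    CStarRing.norm_mul_coe_unitary, CStarRing.norm_coe_unitary_mul, l2_opNorm_diagonal,
    pi_norm_le_iff_of_nonneg hc]
  intro i
  simpa using hd i

lemma conjDiagonal_kronecker_one {e : Type*} [Fintype e] [DecidableEq e] (d : n → ℝ) :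
    conjDiagonal U d ⊗ₖ (1 : Matrix e e ℂ) =
      conjDiagonal ⟨(U : Matrix n n ℂ) ⊗ₖ (1 : Matrix e e ℂ), kronecker_mem_unitary U.2 (one_mem _)⟩
        (d ∘ Prod.fst) := by
  have hdiag : diagonal (RCLike.ofReal ∘ d ∘ Prod.fst) =
      diagonal (RCLike.ofReal ∘ d) ⊗ₖ (1 : Matrix e e ℂ) := by
    rw [← diagonal_one, diagonal_kronecker_diagonal]
    congr 1
    ext p
    simp
  simp only [conjDiagonal, Unitary.conjStarAlgAut_apply, star_eq_conjTranspose,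
    conjTranspose_kronecker, conjTranspose_one, hdiag, ← mul_kronecker_mul, mul_one]

lemma roots_charpoly_conjDiagonal (d : n → ℝ) :
    (conjDiagonal U d).charpoly.roots = Multiset.map (RCLike.ofReal ∘ d) Finset.univ.val := by
  rw [conjDiagonal, Unitary.conjStarAlgAut_apply, charpoly_mul_comm, ← mul_assoc,
    Unitary.coe_star_mul_self, one_mul, charpoly_diagonal, Polynomial.roots_prod]
  · simp
  · simp [Finset.prod_ne_zero_iff, Polynomial.X_sub_C_ne_zero]

lemma IsHermitian.sum_comp_eigenvalues_of_eq_conjDiagonal {A : Matrix n n ℂ} (hA : A.IsHermitian)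
    {d : n → ℝ} (hAd : A = conjDiagonal U d) (f : ℝ → ℝ) :
    ∑ i, f (hA.eigenvalues i) = ∑ i, f (d i) := by
  subst hAd
  have hroots := hA.roots_charpoly_eq_eigenvalues
  rw [roots_charpoly_conjDiagonal] at hroots
  have hmap := congrArg (fun s => (s.map (f ∘ RCLike.re)).sum) hroots
  simp only [Multiset.map_map, Function.comp_def, RCLike.ofReal_re] at hmap
  simp only [Finset.sum_eq_multiset_sum]
  exact hmap.symm

lemma norm_trace_mul_conjDiagonal_le (Y : Matrix n n ℂ) (d : n → ℝ) :
    ‖(Y * conjDiagonal U d).trace‖ ≤ ‖Y‖ * ∑ i, |d i| := by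
  let Y' := (star U : Matrix n n ℂ) * Y * U
  have htrace : (Y * conjDiagonal U d).trace = ∑ i, Y' i i * d i := by
    rw [conjDiagonal, Unitary.conjStarAlgAut_apply, ← mul_assoc, trace_mul_cycle, ← mul_assoc,
      trace]
    simp [Y', mul_diagonal]
  have hY' : ‖Y'‖ = ‖Y‖ := by
    rw [CStarRing.norm_mul_coe_unitary, ← Unitary.coe_star, CStarRing.norm_coe_unitary_mul]
  rw [htrace, Finset.mul_sum]
  refine (norm_sum_le _ _).trans (Finset.sum_le_sum fun i _ => ?_)
  rw [norm_mul, Complex.norm_real, Real.norm_eq_abs, ← hY']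
  exact mul_le_mul_of_nonneg_right (norm_apply_le_l2_opNorm Y' i i) (abs_nonneg _)

end ConjDiagonal

lemma traceNorm_eq_sum_sqrt_eigenvalues (A : Matrix n n ℂ) :
    traceNorm A = ∑ i, √((posSemidef_conjTranspose_mul_self A).1.eigenvalues i) := by
  rw [traceNorm, trace_mul_cycle, Unitary.coe_star_mul_self, one_mul, trace_diagonal,
    Complex.re_sum]
  rfl

lemma traceNorm_nonneg (A : Matrix n n ℂ) : 0 ≤ traceNorm A := by
  rw [traceNorm_eq_sum_sqrt_eigenvalues]
  positivity

lemma traceNorm_conjDiagonal (U : unitaryGroup n ℂ) (d : n → ℝ) :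
    traceNorm (conjDiagonal U d) = ∑ i, |d i| := by
  rw [traceNorm_eq_sum_sqrt_eigenvalues,
    IsHermitian.sum_comp_eigenvalues_of_eq_conjDiagonal U _
      (by rw [conjTranspose_conjDiagonal, conjDiagonal_mul])]
  simp [Real.sqrt_mul_self_eq_abs]

lemma IsHermitian.sum_eigenvalues_eq_one {σ : Matrix n n ℂ} (hσ : σ.IsHermitian)
    (htr : σ.trace = 1) : ∑ i, hσ.eigenvalues i = 1 := by
  simpa [htr] using (congrArg Complex.re hσ.trace_eq_sum_eigenvalues).symm

lemma IsHermitian.abs_eigenvalues_sub_inv_card_le {σ : Matrix n n ℂ} (hσ : σ.IsHermitian)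
    (htr : σ.trace = 1) (i : n) :
    |hσ.eigenvalues i - (Fintype.card n : ℝ)⁻¹| ≤
      traceNorm (σ - (Fintype.card n : ℂ)⁻¹ • 1) / 2 := by
  have hN : (Fintype.card n : ℝ) ≠ 0 := Nat.cast_ne_zero.2 (Fintype.card_pos_iff.2 ⟨i⟩).ne'
  have hdev : σ - (Fintype.card n : ℂ)⁻¹ • 1 =
      conjDiagonal hσ.eigenvectorUnitary (hσ.eigenvalues - fun _ => (Fintype.card n : ℝ)⁻¹) := by
    rw [← conjDiagonal_sub, conjDiagonal_const, ← hσ.eq_conjDiagonal]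
    push_cast
    rfl
  have hsum : ∑ j, (hσ.eigenvalues j - (Fintype.card n : ℝ)⁻¹) = 0 := by
    rw [Finset.sum_sub_distrib, hσ.sum_eigenvalues_eq_one htr, Finset.sum_const, Finset.card_univ,
      nsmul_eq_mul, mul_inv_cancel₀ hN, sub_self]
  rw [hdev, traceNorm_conjDiagonal]
  exact Finset.abs_le_half_sum_abs_of_sum_eq_zero hsum (Finset.mem_univ i)

lemma IsHermitian.norm_matLog2_kronecker_one_sub_le {e : Type*} [Fintype e] [DecidableEq e]
    {σ : Matrix n n ℂ} (hσ : σ.IsHermitian) {a ε : ℝ} (ha : 0 < a) (hε₀ : 0 ≤ ε)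
    (hε : ε ≤ 1 / 2) (hclose : ∀ i, |hσ.eigenvalues i - a| ≤ a * ε) :
    ‖matLog2 σ ⊗ₖ (1 : Matrix e e ℂ) - (Real.logb 2 a : ℂ) • 1‖ ≤ 2 * ε := by
  have hratio : ∀ i, |hσ.eigenvalues i / a - 1| ≤ ε := fun i => by
    rw [div_sub_one ha.ne', abs_div, abs_of_pos ha, div_le_iff₀ ha, mul_comm]
    exact hclose i
  have hhalf : ∀ i, 1 / 2 ≤ hσ.eigenvalues i / a := fun i => by
    linarith [(abs_le.1 (hratio i)).1]
  have hpos : ∀ i, 0 < hσ.eigenvalues i := fun i =>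
    (div_pos_iff_of_pos_right ha).1 (lt_of_lt_of_le (by norm_num) (hhalf i))
  rw [hσ.matLog2_eq_conjDiagonal, conjDiagonal_kronecker_one, ← conjDiagonal_const,
    conjDiagonal_sub]
  refine norm_conjDiagonal_le _ _ (by positivity) fun p => ?_
  rw [Pi.sub_apply, Function.comp_apply, Function.comp_apply,
    ← Real.logb_div (hpos p.1).ne' ha.ne']
  linarith [Real.abs_logb_two_le (hhalf p.1), hratio p.1]

lemma norm_trace_mul_le_of_posSemidef {ρ : Matrix n n ℂ} (hρ : ρ.PosSemidef) (htr : ρ.trace = 1)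
    (Y : Matrix n n ℂ) : ‖(Y * ρ).trace‖ ≤ ‖Y‖ := by
  have h := norm_trace_mul_conjDiagonal_le hρ.1.eigenvectorUnitary Y hρ.1.eigenvalues
  simp only [abs_of_nonneg (hρ.eigenvalues_nonneg _)] at h
  rwa [← hρ.1.eq_conjDiagonal, hρ.1.sum_eigenvalues_eq_one htr, mul_one] at h

lemma norm_trace_mul_mcomm_le {ρ : Matrix n n ℂ} (hρ : ρ.PosSemidef) (htr : ρ.trace = 1)
    (H X : Matrix n n ℂ) (a b : ℂ) :
    ‖trace (H * mcomm X ρ)‖ ≤ 2 * ‖H - a • 1‖ * ‖X - b • 1‖ := by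
  rw [trace_mul_mcomm, ← mcomm_sub_smul_one H X a b]
  exact (norm_trace_mul_le_of_posSemidef hρ htr _).trans (norm_mcomm_le _ _)

end Matrix

/-- Under the hypotheses of Statement 4, the entropy-rate bound holds
with `‖H‖_∞` replaced by `Δ(H)/2`, where `Δ(H) = 2·min_{λ∈ℝ} ‖H − λ·I‖_∞`: the entropy
rate is at most `Δ(H)·d_S·χ`. -/
theorem close_to_mixed_implies_pretty_lazy_interaction_strength {dS dE : ℕ} (hdS : 2 ≤ dS)
    (ρSE : Matrix (Fin dS × Fin dE) (Fin dS × Fin dE) ℂ)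
    (hρ : ρSE.PosSemidef) (htr : ρSE.trace = 1) (χ : ℝ)
    (hχ : χ = traceNorm (ptrace2 ρSE - (dS : ℂ)⁻¹ • (1 : Matrix (Fin dS) (Fin dS) ℂ)))
    (hsmall : χ ≤ 1 / (dS : ℝ)) :
    (ptrace2 ρSE).PosDef ∧
      ∀ H : Matrix (Fin dS × Fin dE) (Fin dS × Fin dE) ℂ, H.IsHermitian →
        ‖Matrix.trace (H *
            mcomm (matLog2 (ptrace2 ρSE) ⊗ₖ (1 : Matrix (Fin dE) (Fin dE) ℂ)) ρSE)‖ ≤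
          (2 * ⨅ l : ℝ, opNorm (H - (l : ℂ) •
              (1 : Matrix (Fin dS × Fin dE) (Fin dS × Fin dE) ℂ))) * (dS : ℝ) * χ := by
  have hd : (0 : ℝ) < dS := by positivity
  have hρS := hρ.ptrace2
  have hclose : ∀ i, |hρS.1.eigenvalues i - (dS : ℝ)⁻¹| ≤ (dS : ℝ)⁻¹ * (dS * χ / 2) := by
    intro i
    have h := hρS.1.abs_eigenvalues_sub_inv_card_le ((trace_ptrace2 ρSE).trans htr) i
    rw [Fintype.card_fin, ← hχ] at h
    rwa [← mul_div_assoc, inv_mul_cancel_left₀ hd.ne']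
  have hε : dS * χ / 2 ≤ 1 / 2 := by
    linarith [(le_div_iff₀ hd).1 hsmall]
  refine ⟨hρS.1.posDef_iff_eigenvalues_pos.2 fun i => ?_, fun H _ => ?_⟩
  · have hdev := (abs_le.1 (hclose i)).1
    have hhalf : (dS : ℝ)⁻¹ * (dS * χ / 2) ≤ (dS : ℝ)⁻¹ * (1 / 2) := by gcongr
    linarith [inv_pos.2 hd]
  · have hχ₀ : 0 ≤ χ := hχ ▸ traceNorm_nonneg _
    have hlog := hρS.1.norm_matLog2_kronecker_one_sub_le (e := Fin dE) (inv_pos.2 hd)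
      (by positivity) hε hclose
    calc _ ≤ ⨅ l : ℝ, opNorm (H - (l : ℂ) • 1) * (2 * (dS * χ)) := le_ciInf fun l => ?_
      _ = _ := by rw [← Real.iInf_mul_of_nonneg (by positivity)]; ring
    calc _ ≤ 2 * ‖H - (l : ℂ) • 1‖ * (2 * (dS * χ / 2)) :=
          (norm_trace_mul_mcomm_le hρ htr H _ _ _).trans (by gcongr)
      _ = _ := by rw [opNorm_eq_norm]; ring
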